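/- Let G be a connected degree-Δ directed graph whose underlying undirected graph is non-bipartite (contains an odd cycle). Then the uniform distribution is a stationary distribution of the random walk on G if and only if G is Eulerian, i.e., d⁻(v) = d⁺(v) for every vertex v. -/

import Mathlib

open Finset

def outdeg {V : Type*} [Fintype V] (A : V → V → Prop) [DecidableRel A] (u : V) : ℕ :=
  (univ.filter (fun v => A u v)).card

def indeg {V : Type*} [Fintype V] (A : V → V → Prop) [DecidableRel A] (v : V) : ℕ :=
  (univ.filter (fun u => A u v)).card

/-!
Write `d⁺`, `d⁻` for out- and in-degree. If the uniform distribution is stationary, then for every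
vertex `v`, with `t = d⁻(v)`,
`∑_{u → v} (d⁺(u) - t)² / d⁺(u) = ∑_{u → v} d⁺(u) - 2t² + t² ∑_{u → v} 1 / d⁺(u) = ∑_{u → v} d⁺(u) - t²`.
Summing over `v` gives `∑ d⁺(u)² - ∑ d⁻(v)²`, which equals `Δ (∑ d⁺ - ∑ d⁻) = 0` when
`d⁺ + d⁻ = Δ`. So `d⁺(u) = d⁻(v)` along every edge `u → v`, hence also `d⁻(u) = d⁺(v)`: the
imbalance `d⁺ - d⁻` changes sign along every edge. An odd closed walk forces it to vanish at one
vertex, and connectivity propagates this to all vertices.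
-/

section RandomWalk

variable {V : Type*} [Fintype V] (A : V → V → Prop) [DecidableRel A]

def IsUniformStationary : Prop :=
  ∀ v : V, ∑ u ∈ univ.filter (fun u => A u v), (1 : ℝ) / outdeg A u = 1

def imbalance (v : V) : ℤ := outdeg A v - indeg A v

variable {A}

lemma outdeg_pos_of_adj {u v : V} (h : A u v) : 0 < outdeg A u :=
  card_pos.mpr ⟨v, mem_filter.mpr ⟨mem_univ v, h⟩⟩

variable (A)

lemma sum_sum_filter_adj_comm {M : Type*} [AddCommMonoid M] (g : V → V → M) :
    ∑ v, ∑ u ∈ univ.filter (fun u => A u v), g u v = ∑ u, ∑ v ∈ univ.filter (A u), g u v := by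
  simp only [sum_filter]
  exact sum_comm

lemma sum_outdeg_eq_sum_indeg : ∑ v, outdeg A v = ∑ v, indeg A v := by
  simpa only [outdeg, indeg, card_eq_sum_ones] using (sum_sum_filter_adj_comm A fun _ _ => 1).symm

lemma sum_sum_filter_adj_outdeg :
    ∑ v, ∑ u ∈ univ.filter (fun u => A u v), (outdeg A u : ℝ) = ∑ u, (outdeg A u : ℝ) ^ 2 := by
  rw [sum_sum_filter_adj_comm A fun u _ => (outdeg A u : ℝ)]
  simp only [sum_const, nsmul_eq_mul, sq]
  rfl

variable {A}

lemma sum_sub_indeg_sq_div_outdeg (hA : IsUniformStationary A) (v : V) :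
    ∑ u ∈ univ.filter (fun u => A u v), ((outdeg A u : ℝ) - indeg A v) ^ 2 / outdeg A u =
      ∑ u ∈ univ.filter (fun u => A u v), (outdeg A u : ℝ) - (indeg A v : ℝ) ^ 2 := by
  set t : ℝ := (indeg A v : ℝ)
  have hterm : ∀ u ∈ univ.filter (fun u => A u v),
      ((outdeg A u : ℝ) - t) ^ 2 / outdeg A u = outdeg A u - 2 * t + t ^ 2 * (1 / outdeg A u) := by
    intro u hu
    have : (outdeg A u : ℝ) ≠ 0 := by
      exact_mod_cast (outdeg_pos_of_adj (mem_filter.mp hu).2).ne'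
    field_simp
    ring
  rw [sum_congr rfl hterm, sum_add_distrib, sum_sub_distrib, ← mul_sum _ _ (t ^ 2), hA v, sum_const,
    nsmul_eq_mul]
  change _ - (indeg A v : ℝ) * (2 * t) + _ = _
  ring

lemma outdeg_eq_indeg_of_adj (hA : IsUniformStationary A) {Δ : ℕ}
    (hreg : ∀ x : V, indeg A x + outdeg A x = Δ) {u v : V} (huv : A u v) :
    outdeg A u = indeg A v := by
  have htotal : ∑ v, ∑ u ∈ univ.filter (fun u => A u v),
      ((outdeg A u : ℝ) - indeg A v) ^ 2 / outdeg A u = 0 := by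
    have hsq : ∀ x, (outdeg A x : ℝ) ^ 2 - (indeg A x : ℝ) ^ 2 =
        Δ * ((outdeg A x : ℝ) - indeg A x) := by
      intro x
      rw [← hreg x]
      push_cast
      ring
    have hsum : (∑ x, (outdeg A x : ℝ)) = ∑ x, (indeg A x : ℝ) := by
      exact_mod_cast sum_outdeg_eq_sum_indeg A
    calc _ = ∑ x, (outdeg A x : ℝ) ^ 2 - ∑ x, (indeg A x : ℝ) ^ 2 := by
          rw [sum_congr rfl fun v _ => sum_sub_indeg_sq_div_outdeg hA v, sum_sub_distrib,
            sum_sum_filter_adj_outdeg]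
      _ = Δ * (∑ x, (outdeg A x : ℝ) - ∑ x, (indeg A x : ℝ)) := by
          rw [← sum_sub_distrib, sum_congr rfl fun x _ => hsq x, ← mul_sum, sum_sub_distrib]
      _ = 0 := by rw [hsum, sub_self, mul_zero]
  have hnonneg : ∀ v, ∀ u ∈ univ.filter (fun u => A u v),
      0 ≤ ((outdeg A u : ℝ) - indeg A v) ^ 2 / outdeg A u := fun _ _ _ => by positivity
  have hterm := (sum_eq_zero_iff_of_nonneg (hnonneg v)).mp
    ((sum_eq_zero_iff_of_nonneg fun v _ => sum_nonneg (hnonneg v)).mp htotal v (mem_univ v))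
    u (mem_filter.mpr ⟨mem_univ u, huv⟩)
  have hpos : (outdeg A u : ℝ) ≠ 0 := by exact_mod_cast (outdeg_pos_of_adj huv).ne'
  rw [div_eq_zero_iff, or_iff_left hpos, sq_eq_zero_iff, sub_eq_zero] at hterm
  exact_mod_cast hterm

lemma imbalance_eq_neg_of_adj (hA : IsUniformStationary A) {Δ : ℕ}
    (hreg : ∀ x : V, indeg A x + outdeg A x = Δ) {u v : V} (huv : A u v ∨ A v u) :
    imbalance A v = -imbalance A u := by
  have hu := hreg u
  have hv := hreg v
  unfold imbalance
  rcases huv with huv | hvu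
  · have := outdeg_eq_indeg_of_adj hA hreg huv
    omega
  · have := outdeg_eq_indeg_of_adj hA hreg hvu
    omega

lemma isUniformStationary_of_regular (hout : ∀ u v, outdeg A u = outdeg A v)
    (hpos : ∀ v, 0 < outdeg A v) (heul : ∀ v, indeg A v = outdeg A v) :
    IsUniformStationary A := by
  intro v
  have hv : (outdeg A v : ℝ) ≠ 0 := by exact_mod_cast (hpos v).ne'
  simp only [hout _ v, sum_const, nsmul_eq_mul]
  rw [show (univ.filter fun u => A u v).card = indeg A v from rfl, heul, mul_one_div_cancel hv]

end RandomWalk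

section SignFlip

variable {V : Type*} {R : V → V → Prop} {f : V → ℤ}

lemma eq_zero_of_reflTransGen_of_neg (hf : ∀ a b, R a b → f b = -f a) {a b : V}
    (ha : f a = 0) (hab : Relation.ReflTransGen R a b) : f b = 0 := by
  induction hab with
  | refl => exact ha
  | tail _ hbc ih => rw [hf _ _ hbc, ih, neg_zero]

lemma eq_zero_of_odd_closed_walk (hf : ∀ a b, R a b → f b = -f a) {L : ℕ} (hL : Odd L)
    {w : ℕ → V} (hwalk : ∀ i < L, R (w i) (w (i + 1))) (hclosed : w L = w 0) : f (w 0) = 0 := by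
  have halt : ∀ i ≤ L, f (w i) = (-1) ^ i * f (w 0) := by
    intro i
    induction i with
    | zero => simp
    | succ i ih =>
      intro hi
      rw [hf _ _ (hwalk i hi), ih (by omega), pow_succ]
      ring
  have := halt L le_rfl
  rw [hclosed, hL.neg_one_pow] at this
  omega

end SignFlip

/-- For a connected degree-Δ graph whose underlying undirected graph is non-bipartite
(has a closed walk of odd length), the uniform distribution is stationary for the
random walk iff the graph is Eulerian (`d⁻(v) = d⁺(v)` for all `v`). -/
theorem stmt8 {V : Type*} [Fintype V] (A : V → V → Prop) [DecidableRel A] (Δ : ℕ)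
    (hΔ : 0 < Δ)
    (hreg : ∀ x : V, indeg A x + outdeg A x = Δ)
    (hconn : ∀ x y : V, Relation.ReflTransGen (fun a b => A a b ∨ A b a) x y)
    (hodd : ∃ (x : V) (L : ℕ), Odd L ∧ ∃ w : ℕ → V, w 0 = x ∧ w L = x ∧
      ∀ i < L, A (w i) (w (i + 1)) ∨ A (w (i + 1)) (w i)) :
    (∀ v : V, ∑ u ∈ univ.filter (fun u => A u v), (1 : ℝ) / (outdeg A u) = 1) ↔
      ∀ v : V, indeg A v = outdeg A v := by
  constructor
  · intro hA v
    obtain ⟨x, L, hL, w, hw0, hwL, hwalk⟩ := hodd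
    have hflip : ∀ a b, (A a b ∨ A b a) → imbalance A b = -imbalance A a :=
      fun _ _ hab => imbalance_eq_neg_of_adj hA hreg hab
    have hx : imbalance A x = 0 :=
      hw0 ▸ eq_zero_of_odd_closed_walk hflip hL hwalk (hwL.trans hw0.symm)
    have hv := eq_zero_of_reflTransGen_of_neg hflip hx (hconn x v)
    unfold imbalance at hv
    omega
  · intro heul
    have hhalf : ∀ v, 2 * outdeg A v = Δ := fun v => by have := hreg v; have := heul v; omega
    exact isUniformStationary_of_regular (fun u v => by have := hhalf u; have := hhalf v; omega)
      (fun v => by have := hhalf v; omega) heul
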